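/- Let Z = (Z_1, ..., Z_N) be a random vector whose components are i.i.d. standard Gaussian random variables, let |Z| denote its Euclidean norm, and set λ = √N / |Z|. Then for all t ∈ [0,1), Pr(|1 − λ| > t) ≤ exp(−N·g₊(t)²) + exp(−N·g₋(t)²). -/

import Mathlib

set_option maxHeartbeats 1000000

open MeasureTheory ProbabilityTheory Real Set
open scoped ENNReal NNReal

/-- `g₊(t) = (1/2)(1 − 1/(1+t)²)`. -/
noncomputable def gPlus (t : ℝ) : ℝ := (1 / 2) * (1 - 1 / (1 + t) ^ 2)

/-- `g₋(t) = (1/2)(√(2/(1−t)² − 1) − 1)`. -/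
noncomputable def gMinus (t : ℝ) : ℝ := (1 / 2) * (Real.sqrt (2 / (1 - t) ^ 2 - 1) - 1)

lemma log_le_aux1 {x : ℝ} (hx0 : 0 ≤ x) (hx1 : x < 1) :
    Real.log (1 - x) ≤ -x - x ^ 2 / 2 := by
  set f : ℝ → ℝ := fun x => -x - x ^ 2 / 2 - Real.log (1 - x) with hf
  have hd : ∀ y ∈ Set.Ioo (0:ℝ) 1, HasDerivAt f (y ^ 2 / (1 - y)) y := by
    intro y hy
    have h1y : (1:ℝ) - y ≠ 0 := by nlinarith [hy.1, hy.2]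
    have h1 : HasDerivAt (fun y : ℝ => 1 - y) (-1) y := by
      exact (hasDerivAt_id' y).const_sub 1
    have h2 : HasDerivAt (fun y : ℝ => Real.log (1 - y)) ((1 - y)⁻¹ * (-1)) y :=
      (Real.hasDerivAt_log h1y).comp y h1
    have h3 : HasDerivAt (fun y : ℝ => -y - y ^ 2 / 2) (-1 - 2 * y ^ 1 / 2) y :=
      ((hasDerivAt_id y).neg).sub ((hasDerivAt_pow 2 y).div_const 2)
    have := h3.sub h2
    refine this.congr_deriv ?_
    field_simp
    ring
  have hmono : MonotoneOn f (Set.Ico (0:ℝ) 1) := by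
    apply monotoneOn_of_deriv_nonneg (convex_Ico 0 1)
    · apply ContinuousOn.sub
      · fun_prop
      · apply ContinuousOn.log
        · fun_prop
        · intro y hy
          have := hy.2
          intro h
          nlinarith
    · rw [interior_Ico]
      intro y hy
      exact (hd y hy).differentiableAt.differentiableWithinAt
    · rw [interior_Ico]
      intro y hy
      rw [(hd y hy).deriv]
      have h1 := hy.1; have h2 := hy.2
      apply div_nonneg (by positivity)
      linarith
  have h0 : f 0 = 0 := by simp [hf]
  have := hmono (Set.mem_Ico.2 ⟨le_refl 0, one_pos⟩) (Set.mem_Ico.2 ⟨hx0, hx1⟩) hx0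
  rw [h0] at this
  simp only [hf] at this
  linarith

lemma log_le_aux2 {y : ℝ} (hy : 1 ≤ y) :
    Real.log y ≤ (y ^ 2 - 1) / (2 * y) := by
  set g : ℝ → ℝ := fun y => y / 2 - (2 * y)⁻¹ - Real.log y with hg
  have hd : ∀ z ∈ Set.Ioi (0:ℝ), HasDerivAt g ((z - 1) ^ 2 / (2 * z ^ 2)) z := by
    intro z hz
    simp only [Set.mem_Ioi] at hz
    have hz0 : z ≠ 0 := ne_of_gt hz
    have h2z : (2:ℝ) * z ≠ 0 := by positivity
    have h1 : HasDerivAt (fun z : ℝ => (2 * z)⁻¹) (-(2 / (2 * z) ^ 2)) z := by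
      have := ((hasDerivAt_id z).const_mul (2:ℝ)).inv h2z
      exact this.congr_deriv (by simp only [id, mul_one, neg_div])
    have h2 : HasDerivAt g (1 / 2 - -(2 / (2 * z) ^ 2) - z⁻¹) z :=
      (((hasDerivAt_id z).div_const 2).sub h1).sub (Real.hasDerivAt_log hz0)
    convert h2 using 1
    field_simp
    ring
  have hmono : MonotoneOn g (Set.Ici (1:ℝ)) := by
    apply monotoneOn_of_deriv_nonneg (convex_Ici 1)
    · apply ContinuousOn.sub
      · apply ContinuousOn.sub
        · fun_prop
        · apply ContinuousOn.inv₀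
          · fun_prop
          · intro z hz
            simp only [Set.mem_Ici] at hz
            nlinarith
      · apply ContinuousOn.log
        · fun_prop
        · intro z hz
          simp only [Set.mem_Ici] at hz
          nlinarith
    · rw [interior_Ici]
      intro z hz
      simp only [Set.mem_Ioi] at hz
      exact (hd z (by simp; linarith)).differentiableAt.differentiableWithinAt
    · rw [interior_Ici]
      intro z hz
      simp only [Set.mem_Ioi] at hz
      rw [(hd z (by simp; linarith)).deriv]
      positivity
  have h1 : g 1 = 0 := by norm_num [hg]
  have := hmono (Set.mem_Ici.2 le_rfl) (Set.mem_Ici.2 hy) hy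
  rw [h1] at this
  simp only [hg] at this
  have hy0 : 0 < y := lt_of_lt_of_le one_pos hy
  have heq : (y ^ 2 - 1) / (2 * y) = y / 2 - (2 * y)⁻¹ := by
    field_simp
  rw [heq]; linarith

lemma gauss_pdf_smul (r : ℝ) (x : ℝ) :
    gaussianPDFReal 0 1 x * Real.exp (r * x ^ 2) =
      (Real.sqrt (2 * π))⁻¹ * Real.exp (-(1 / 2 - r) * x ^ 2) := by
  rw [gaussianPDFReal]
  push_cast
  rw [mul_assoc, ← Real.exp_add]
  ring_nf

lemma integrable_pdf_exp {r : ℝ} (hr : r < 1 / 2) :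
    Integrable (fun x => gaussianPDFReal 0 1 x * Real.exp (r * x ^ 2)) := by
  simp only [gauss_pdf_smul]
  exact (integrable_exp_neg_mul_sq (by linarith)).const_mul _

lemma integrable_exp_sq_gaussian {r : ℝ} (hr : r < 1 / 2) :
    Integrable (fun x => Real.exp (r * x ^ 2)) (gaussianReal 0 1) := by
  rw [gaussianReal_of_var_ne_zero _ one_ne_zero]
  have hmeas : Measurable fun x => (gaussianPDFReal 0 1 x).toNNReal :=
    (measurable_gaussianPDFReal 0 1).real_toNNReal
  rw [show gaussianPDF 0 1 = fun x => ((gaussianPDFReal 0 1 x).toNNReal : ℝ≥0∞) from rfl,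
    integrable_withDensity_iff_integrable_smul hmeas]
  apply (integrable_pdf_exp hr).congr
  filter_upwards with x
  rw [NNReal.smul_def, Real.coe_toNNReal _ (gaussianPDFReal_nonneg 0 1 x), smul_eq_mul]

lemma integral_exp_sq_gaussian {r : ℝ} (hr : r < 1 / 2) :
    ∫ x, Real.exp (r * x ^ 2) ∂(gaussianReal 0 1) = 1 / Real.sqrt (1 - 2 * r) := by
  rw [gaussianReal_of_var_ne_zero _ one_ne_zero]
  have hmeas : Measurable fun x => (gaussianPDFReal 0 1 x).toNNReal :=
    (measurable_gaussianPDFReal 0 1).real_toNNReal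
  rw [show gaussianPDF 0 1 = fun x => ((gaussianPDFReal 0 1 x).toNNReal : ℝ≥0∞) from rfl,
    integral_withDensity_eq_integral_smul hmeas]
  have heq : ∀ x : ℝ, (gaussianPDFReal 0 1 x).toNNReal • Real.exp (r * x ^ 2)
      = gaussianPDFReal 0 1 x * Real.exp (r * x ^ 2) := fun x => by
    rw [NNReal.smul_def, Real.coe_toNNReal _ (gaussianPDFReal_nonneg 0 1 x), smul_eq_mul]
  simp only [heq, gauss_pdf_smul]
  rw [integral_const_mul, integral_gaussian]
  have hb : (0:ℝ) < 1 / 2 - r := by linarith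
  have h1 : π / (1 / 2 - r) = 2 * π / (1 - 2 * r) := by
    rw [div_eq_div_iff (by linarith) (by linarith)]; ring
  rw [h1, Real.sqrt_div (by positivity)]
  have h2 : Real.sqrt (2 * π) ≠ 0 := by positivity
  field_simp

lemma pow_one_div_sqrt {q : ℝ} (hq : 0 < q) (N : ℕ) :
    (1 / Real.sqrt q) ^ N = Real.exp ((N : ℝ) * (-(Real.log q / 2))) := by
  have h1 : Real.sqrt q = Real.exp (Real.log q / 2) := by
    rw [Real.sqrt_eq_rpow, Real.rpow_def_of_pos hq, mul_one_div]
  rw [h1, one_div, ← Real.exp_neg, ← Real.exp_nat_mul]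

lemma aux_id1 {q : ℝ} (hq : q ≠ 0) : -(-((q - 1) / 2)) * (1 / q) = (1 - 1 / q) / 2 := by
  field_simp

lemma aux_id2 {y : ℝ} (hy : y ≠ 0) : (1 - 2 * ((y - 1) / (2 * y))) * y = 1 := by
  field_simp
  ring

lemma aux_id3 {y c : ℝ} (hy : y ≠ 0) :
    4 * y * (-((y - 1) / (2 * y)) * ((y ^ 2 + 1) / 2) + c / 2) = -(y - 1) * (y ^ 2 + 1) + 2 * y * c := by
  field_simp
  ring

theorem lambda_concentration
    {N : ℕ} (hN : 0 < N) {Ω : Type*} [MeasurableSpace Ω]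
    (P : Measure Ω) [IsProbabilityMeasure P]
    (Z : Fin N → Ω → ℝ) (hmeas : ∀ i, Measurable (Z i))
    (hindep : iIndepFun Z P)
    (hgauss : ∀ i, Measure.map (Z i) P = gaussianReal 0 1)
    (t : ℝ) (ht : t ∈ Set.Ico (0 : ℝ) 1) :
    P {ω | t < |1 - Real.sqrt N / Real.sqrt (∑ i, Z i ω ^ 2)|} ≤
      ENNReal.ofReal (Real.exp (-N * gPlus t ^ 2)) +
        ENNReal.ofReal (Real.exp (-N * gMinus t ^ 2)) := by
  obtain ⟨ht0, ht1⟩ := ht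
  have h1t : (0:ℝ) < 1 + t := by linarith
  have h1t' : (0:ℝ) < 1 - t := by linarith
  set X : Fin N → Ω → ℝ := fun i ω => Z i ω ^ 2 with hX
  have hXmeas : ∀ i, Measurable (X i) := fun i => (hmeas i).pow_const 2
  have hXindep : iIndepFun X P :=
    hindep.comp (fun _ x => x ^ 2) (fun _ => measurable_id.pow_const 2)
  have hcont : ∀ r : ℝ, Continuous (fun x : ℝ => Real.exp (r * x ^ 2)) := by
    intro r; continuity
  have hint : ∀ r : ℝ, r < 1/2 → ∀ i, Integrable (fun ω => Real.exp (r * X i ω)) P := by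
    intro r hr i
    have h := integrable_exp_sq_gaussian hr
    rw [← hgauss i] at h
    exact (integrable_map_measure (hcont r).aestronglyMeasurable
      (hmeas i).aemeasurable).mp h
  have hmgf : ∀ r : ℝ, r < 1/2 → ∀ i, mgf (X i) P r = 1 / Real.sqrt (1 - 2 * r) := by
    intro r hr i
    rw [mgf, ← integral_exp_sq_gaussian hr, ← hgauss i,
      integral_map (hmeas i).aemeasurable (hcont r).aestronglyMeasurable]
  have hmgfsum : ∀ r : ℝ, r < 1/2 →
      mgf (∑ i, X i) P r = (1 / Real.sqrt (1 - 2 * r)) ^ N := by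
    intro r hr
    rw [hXindep.mgf_sum hXmeas Finset.univ]
    simp [hmgf r hr]
  have hintsum : ∀ r : ℝ, r < 1/2 → Integrable (fun ω => Real.exp (r * (∑ i, X i) ω)) P :=
    fun r hr => hXindep.integrable_exp_mul_sum hXmeas (fun i _ => hint r hr i)
  -- constants
  set b : ℝ := 1 / (1 + t) ^ 2 with hb
  set a : ℝ := 1 / (1 - t) ^ 2 with ha
  have hbpos : 0 < b := by positivity
  have ha1 : 1 ≤ a := by
    rw [ha, le_div_iff₀ (by positivity)]; nlinarith
  set y : ℝ := Real.sqrt (2 * a - 1) with hy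
  have hy1 : 1 ≤ y := by
    have h := Real.sqrt_le_sqrt (show (1:ℝ) ≤ 2 * a - 1 by linarith)
    rwa [Real.sqrt_one] at h
  have hy0 : (0:ℝ) < y := lt_of_lt_of_le one_pos hy1
  have hy2 : y ^ 2 = 2 * a - 1 := Real.sq_sqrt (by linarith)
  -- event inclusion
  have hsub : {ω | t < |1 - Real.sqrt N / Real.sqrt (∑ i, Z i ω ^ 2)|} ⊆
      {ω | (∑ i, X i) ω ≤ (N : ℝ) * b} ∪ {ω | (N : ℝ) * a ≤ (∑ i, X i) ω} := by
    intro ω hω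
    simp only [Set.mem_setOf_eq] at hω
    have hSnn : 0 ≤ ∑ i, Z i ω ^ 2 := Finset.sum_nonneg (fun i _ => sq_nonneg _)
    have hSX : (∑ i, X i) ω = ∑ i, Z i ω ^ 2 := by simp [hX]
    have hNnn : (0:ℝ) ≤ (N : ℝ) := Nat.cast_nonneg N
    rw [lt_abs] at hω
    rcases hω with h | h
    · by_cases hA : (∑ i, Z i ω ^ 2) ≤ (N : ℝ) * b
      · left; simp only [Set.mem_setOf_eq, hSX]; exact hA
      right
      push_neg at hA
      have hSpos : 0 < ∑ i, Z i ω ^ 2 := lt_of_le_of_lt (by positivity) hA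
      have hsq : 0 < Real.sqrt (∑ i, Z i ω ^ 2) := Real.sqrt_pos.2 hSpos
      have hlam : Real.sqrt N / Real.sqrt (∑ i, Z i ω ^ 2) < 1 - t := by linarith
      have h2 : Real.sqrt N < (1 - t) * Real.sqrt (∑ i, Z i ω ^ 2) :=
        (div_lt_iff₀ hsq).mp hlam
      have h3 : (N : ℝ) < (1 - t) ^ 2 * (∑ i, Z i ω ^ 2) := by
        have := pow_lt_pow_left₀ h2 (Real.sqrt_nonneg _) (two_ne_zero)
        rwa [mul_pow, Real.sq_sqrt hSnn, Real.sq_sqrt hNnn] at this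
      simp only [Set.mem_setOf_eq, hSX, ha, mul_one_div]
      rw [div_le_iff₀ (by positivity)]
      nlinarith
    · left
      have hlam : 1 + t < Real.sqrt N / Real.sqrt (∑ i, Z i ω ^ 2) := by linarith
      have hsq : 0 < Real.sqrt (∑ i, Z i ω ^ 2) := by
        rcases lt_or_eq_of_le (Real.sqrt_nonneg (∑ i, Z i ω ^ 2)) with h' | h'
        · exact h'
        · rw [← h', div_zero] at hlam; linarith
      have h2 : (1 + t) * Real.sqrt (∑ i, Z i ω ^ 2) < Real.sqrt N :=
        (lt_div_iff₀ hsq).mp hlam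
      have h3 : (1 + t) ^ 2 * (∑ i, Z i ω ^ 2) < (N : ℝ) := by
        have := pow_lt_pow_left₀ h2 (by positivity) (two_ne_zero)
        rwa [mul_pow, Real.sq_sqrt hSnn, Real.sq_sqrt hNnn] at this
      simp only [Set.mem_setOf_eq, hSX, hb, mul_one_div]
      rw [le_div_iff₀ (by positivity)]
      nlinarith
  refine le_trans (measure_mono hsub) (le_trans (measure_union_le _ _) ?_)
  have hNnn : (0:ℝ) ≤ (N : ℝ) := Nat.cast_nonneg N
  apply add_le_add
  · -- lower tail
    set r₀ : ℝ := -(((1 + t) ^ 2 - 1) / 2) with hr₀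
    have hr₀le : r₀ ≤ 0 := by rw [hr₀]; nlinarith
    have hr₀lt : r₀ < 1/2 := lt_of_le_of_lt hr₀le one_half_pos
    have h2r₀ : 1 - 2 * r₀ = (1 + t) ^ 2 := by rw [hr₀]; ring
    have chern := measure_le_le_exp_mul_mgf (μ := P) (X := ∑ i, X i)
      ((N : ℝ) * b) hr₀le (hintsum r₀ hr₀lt)
    rw [hmgfsum r₀ hr₀lt, h2r₀, pow_one_div_sqrt (by positivity), ← Real.exp_add] at chern
    have hreal : Real.exp (-r₀ * ((N : ℝ) * b) + (N : ℝ) * (-(Real.log ((1 + t) ^ 2) / 2)))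
        ≤ Real.exp (-N * gPlus t ^ 2) := by
      rw [Real.exp_le_exp]
      have hq1 : (1:ℝ) ≤ (1 + t) ^ 2 := by nlinarith
      set q : ℝ := (1 + t) ^ 2 with hq
      set x : ℝ := 1 - b with hxd
      have hq0 : (0:ℝ) < q := by positivity
      have hbq : b = 1 / q := rfl
      have hx0 : 0 ≤ x := by
        rw [hxd, sub_nonneg, hbq, div_le_one hq0]; linarith
      have hx1 : x < 1 := by rw [hxd]; linarith
      have hlogq : x + x ^ 2 / 2 ≤ Real.log q := by
        have h := log_le_aux1 hx0 hx1
        have : (1:ℝ) - x = 1 / q := by rw [hxd, hbq]; ring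
        rw [this, Real.log_div one_ne_zero (ne_of_gt hq0), Real.log_one] at h
        linarith
      have hgp : gPlus t = x / 2 := by
        simp only [gPlus, hxd, hbq, hq]; ring
      have hr0b : -r₀ * b = x / 2 := by
        rw [hr₀, hxd, hbq]
        exact aux_id1 (ne_of_gt hq0)
      rw [hgp]
      have hper : -r₀ * b - Real.log q / 2 ≤ -((x / 2) ^ 2) := by
        rw [hr0b]
        nlinarith [hlogq]
      have hmul := mul_le_mul_of_nonneg_left hper hNnn
      nlinarith [hmul]
    calc P {ω | (∑ i, X i) ω ≤ (N : ℝ) * b}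
        = ENNReal.ofReal (P {ω | (∑ i, X i) ω ≤ (N : ℝ) * b}).toReal :=
          (ENNReal.ofReal_toReal (measure_ne_top _ _)).symm
      _ ≤ ENNReal.ofReal (Real.exp (-N * gPlus t ^ 2)) :=
          ENNReal.ofReal_le_ofReal (le_trans chern hreal)
  · -- upper tail
    set r₁ : ℝ := (y - 1) / (2 * y) with hr₁
    have hr₁nn : 0 ≤ r₁ := by
      apply div_nonneg (by linarith) (by positivity)
    have hr₁lt : r₁ < 1/2 := by
      rw [hr₁, div_lt_div_iff₀ (by positivity) two_pos]
      linarith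
    have h2r₁ : 1 - 2 * r₁ = 1 / y := by
      rw [hr₁, eq_div_iff (ne_of_gt hy0)]
      exact aux_id2 (ne_of_gt hy0)
    have chern := measure_ge_le_exp_mul_mgf (μ := P) (X := ∑ i, X i)
      ((N : ℝ) * a) hr₁nn (hintsum r₁ hr₁lt)
    rw [hmgfsum r₁ hr₁lt, h2r₁, pow_one_div_sqrt (by positivity), ← Real.exp_add] at chern
    have hreal : Real.exp (-r₁ * ((N : ℝ) * a) + (N : ℝ) * (-(Real.log (1 / y) / 2)))
        ≤ Real.exp (-N * gMinus t ^ 2) := by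
      rw [Real.exp_le_exp]
      have hlogy : Real.log (1 / y) = -Real.log y := by
        rw [Real.log_div one_ne_zero (ne_of_gt hy0), Real.log_one]; ring
      have hgm : gMinus t = (y - 1) / 2 := by
        have harg : 2 / (1 - t) ^ 2 - 1 = 2 * a - 1 := by rw [ha]; ring
        rw [gMinus, harg, ← hy]; ring
      have hlog := log_le_aux2 hy1
      have hlog' : 2 * y * Real.log y ≤ y ^ 2 - 1 := by
        rw [le_div_iff₀ (by positivity)] at hlog
        linarith
      have ha' : a = (y ^ 2 + 1) / 2 := by linarith [hy2]
      have hper : -r₁ * a + Real.log y / 2 ≤ -(((y - 1) / 2) ^ 2) := by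
        have h4y : (0:ℝ) < 4 * y := by positivity
        rw [← mul_le_mul_iff_right₀ h4y]
        have hexp : 4 * y * (-r₁ * a + Real.log y / 2)
            = -(y - 1) * (y ^ 2 + 1) + 2 * y * Real.log y := by
          rw [hr₁, ha']; exact aux_id3 (ne_of_gt hy0)
        have hexp2 : 4 * y * (-(((y - 1) / 2) ^ 2)) = -y * (y - 1) ^ 2 := by ring
        rw [hexp, hexp2]
        nlinarith [hlog']
      rw [hlogy, hgm]
      have hmul := mul_le_mul_of_nonneg_left hper hNnn
      nlinarith [hmul]
    calc P {ω | (N : ℝ) * a ≤ (∑ i, X i) ω}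
        = ENNReal.ofReal (P {ω | (N : ℝ) * a ≤ (∑ i, X i) ω}).toReal :=
          (ENNReal.ofReal_toReal (measure_ne_top _ _)).symm
      _ ≤ ENNReal.ofReal (Real.exp (-N * gMinus t ^ 2)) :=
          ENNReal.ofReal_le_ofReal (le_trans chern hreal)
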